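/- arXiv:2409.08405 — 9 statements merged into one kernel-verified Lean document; each statement's English description precedes it below -/
import Mathlib

section
/- Let G = (V,E) be a graph and W(G) its wedge graph. A set C of vertices of W(G) is a vertex cover of W(G) if and only if the labeling S = E ∖ { e ∈ E : n_e ∈ C } fulfills the strong triadic closure for E. -/
/-- A wedge `(v, {u, w})` of an edge set `E`. -/
def IsWedge {V : Type*} (E : Finset (Sym2 V)) (v u w : V) : Prop :=
  u ≠ v ∧ v ≠ w ∧ u ≠ w ∧ s(u, v) ∈ E ∧ s(v, w) ∈ E ∧ s(u, w) ∉ E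

/-- A labeling `S ⊆ E` fulfills the strong triadic closure for `E`. -/
def FulfillsSTC {V : Type*} (E S : Finset (Sym2 V)) : Prop :=
  ∀ u v w : V, u ≠ v → v ≠ w → u ≠ w → s(u, v) ∈ S → s(v, w) ∈ S → s(u, w) ∈ E

/-- A set `C` of vertices of the wedge graph `W(G)` (identified with the corresponding
set of edges of `G`) is a vertex cover of `W(G)`: the wedge graph has a vertex `n_e` for
every `e ∈ E`, and `n_{uv}` and `n_{vw}` are adjacent iff `(v,{u,w})` is a wedge of `E`;
a vertex cover contains at least one endpoint of every such edge. -/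
def IsWedgeGraphVC {V : Type*} (E C : Finset (Sym2 V)) : Prop :=
  ∀ v u w : V, IsWedge E v u w → s(u, v) ∈ C ∨ s(v, w) ∈ C

/-- `C` is a vertex cover of the wedge graph `W(G)` iff `S = E ∖ {e ∈ E : n_e ∈ C}`
fulfills the strong triadic closure for `E`. -/
theorem wedge_graph_vc_iff_stc {V : Type*} [DecidableEq V]
    (E C : Finset (Sym2 V)) (hC : C ⊆ E) :
    IsWedgeGraphVC E C ↔ FulfillsSTC E (E \ E.filter (fun e => e ∈ C)) := by
  constructor
  · intro h u v w huv hvw huw hS1 hS2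
    simp only [Finset.mem_sdiff, Finset.mem_filter, not_and] at hS1 hS2
    by_contra hne
    rcases h v u w ⟨huv, hvw, huw, hS1.1, hS2.1, hne⟩ with hc | hc
    · exact hS1.2 hS1.1 hc
    · exact hS2.2 hS2.1 hc
  · intro h v u w ⟨huv, hvw, huw, hE1, hE2, hne⟩
    by_contra hnc
    push_neg at hnc
    exact hne (h u v w huv hvw huw (by simp [Finset.mem_sdiff, hE1, hnc.1])
      (by simp [Finset.mem_sdiff, hE2, hnc.2]))
end

section
/- Let G = (V, E_1, …, E_k) be a multilayer graph and S_i ⊆ E_i (i ∈ [k]) labelings each fulfilling the STC for E_i, and let s* = Σ_{i∈[k]} |S_i| − d_k(S_1,…,S_k). Define F_i = { e ∈ S_i : e ∈ E_j∖S_j for some j ∈ [k] } and H_i = S_i ∖ F_i. Then each H_i fulfills the STC for E_i, d_k(H_1,…,H_k) = 0, and Σ_{i∈[k]} |H_i| = s*. -/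
/-!
Each `H_i` is a subset of `S_i`, and the STC is inherited by subsets of a labeling. An edge
survives in `H_i` only if it is weak in no layer, i.e. it is strong in every layer containing it,
so the `H_i` have no disagreements. Counting `d_k(S_1, …, S_k)` layer by layer instead of edge by
edge gives `d_k = ∑_i |F_i|`, hence `∑_i |H_i| = ∑_i |S_i| - ∑_i |F_i| = s*`.
-/

open Finset

/-- `s(e)`: the number of layers in which `e` is labeled strong. -/
def sCount {V : Type*} [DecidableEq V] {k : ℕ} (Ss : Fin k → Finset (Sym2 V))
    (e : Sym2 V) : ℕ :=
  (Finset.univ.filter fun i => e ∈ Ss i).card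

/-- `w(e)`: the number of layers in which `e` is labeled weak. -/
def wCount {V : Type*} [DecidableEq V] {k : ℕ} (Es Ss : Fin k → Finset (Sym2 V))
    (e : Sym2 V) : ℕ :=
  (Finset.univ.filter fun i => e ∈ Es i ∧ e ∉ Ss i).card

/-- `d_k(S_1, …, S_k) = ∑_{e ∈ E, w(e) > 0} s(e)`: the number of disagreements. -/
def disagree {V : Type*} [DecidableEq V] {k : ℕ} (Es Ss : Fin k → Finset (Sym2 V)) : ℕ :=
  ∑ e ∈ (Finset.univ.biUnion Es).filter (fun e => 0 < wCount Es Ss e), sCount Ss e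

theorem FulfillsSTC.mono {V : Type*} {E S T : Finset (Sym2 V)} (hTS : T ⊆ S)
    (hS : FulfillsSTC E S) : FulfillsSTC E T :=
  fun u v w huv hvw huw huvT hvwT => hS u v w huv hvw huw (hTS huvT) (hTS hvwT)

section Disagreements

variable {V : Type*} [DecidableEq V] {k : ℕ} (Es Ss : Fin k → Finset (Sym2 V))

theorem wCount_pos_iff (e : Sym2 V) : 0 < wCount Es Ss e ↔ ∃ j, e ∈ Es j ∧ e ∉ Ss j := by
  simp [wCount, card_pos, filter_nonempty_iff]

/-- Double counting. An edge that is weak in layer `j` lies in `E_j`, so the restriction of the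
sum in `disagree` to the aggregated edge set is vacuous. -/
theorem disagree_eq_sum_card_filter :
    disagree Es Ss = ∑ i, ((Ss i).filter fun e => ∃ j, e ∈ Es j ∧ e ∉ Ss j).card := by
  have hlayer : ∀ i, (Ss i).filter (fun e => ∃ j, e ∈ Es j ∧ e ∉ Ss j) =
      ((univ.biUnion Es).filter (0 < wCount Es Ss ·)).filter (· ∈ Ss i) := by
    intro i
    ext e
    simp only [mem_filter, mem_biUnion, mem_univ, true_and, wCount_pos_iff]
    constructor
    · rintro ⟨hSi, j, hEj, hSj⟩
      exact ⟨⟨⟨j, hEj⟩, j, hEj, hSj⟩, hSi⟩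
    · rintro ⟨⟨-, hweak⟩, hSi⟩
      exact ⟨hSi, hweak⟩
  simp only [hlayer, card_filter, disagree, sCount]
  exact sum_comm

theorem disagree_eq_zero_of_forall_mem
    (hcons : ∀ i j e, e ∈ Ss i → e ∈ Es j → e ∈ Ss j) : disagree Es Ss = 0 := by
  rw [disagree_eq_sum_card_filter]
  refine sum_eq_zero fun i _ => card_eq_zero.2 <| filter_eq_empty_iff.2 ?_
  rintro e hSi ⟨j, hEj, hSj⟩
  exact hSj (hcons i j e hSi hEj)

end Disagreements

theorem consistent_relabeling_general {V : Type*} [DecidableEq V] {k : ℕ}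
    (Es Ss : Fin k → Finset (Sym2 V))
    (hstc : ∀ i, FulfillsSTC (Es i) (Ss i)) :
    let F : Fin k → Finset (Sym2 V) :=
      fun i => (Ss i).filter fun e => ∃ j, e ∈ Es j ∧ e ∉ Ss j
    let H : Fin k → Finset (Sym2 V) := fun i => Ss i \ F i
    (∀ i, FulfillsSTC (Es i) (H i)) ∧ disagree Es H = 0 ∧
      (∑ i : Fin k, ((H i).card : ℤ)) =
        (∑ i : Fin k, ((Ss i).card : ℤ)) - (disagree Es Ss : ℤ) := by
  intro F H
  have hH : ∀ i e, e ∈ H i ↔ e ∈ Ss i ∧ ∀ j, e ∈ Es j → e ∈ Ss j := by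
    intro i e
    simp only [H, F, mem_sdiff, mem_filter, not_and, not_exists, not_not]
    tauto
  have hcard : ∀ i, ((H i).card : ℤ) + (F i).card = (Ss i).card := fun i => by
    exact_mod_cast card_sdiff_add_card_eq_card (filter_subset _ _)
  refine ⟨fun i => (hstc i).mono sdiff_subset, disagree_eq_zero_of_forall_mem _ _ ?_, ?_⟩
  · intro i j e hHi hEj
    obtain ⟨-, hcons⟩ := (hH i e).1 hHi
    exact (hH j e).2 ⟨hcons j hEj, hcons⟩
  · rw [disagree_eq_sum_card_filter, ← sum_congr rfl fun i _ => hcard i]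
    push_cast
    rw [sum_add_distrib]
    ring

/-- Removing from each `S_i` the strong edges that are weak in some layer yields
labelings `H_i` that still fulfill the STC, have no disagreements, and whose total
size equals `s* = ∑_i |S_i| − d_k(S_1, …, S_k)`. -/
theorem consistent_relabeling {V : Type*} [DecidableEq V] {k : ℕ}
    (Es Ss : Fin k → Finset (Sym2 V)) (hS : ∀ i, Ss i ⊆ Es i)
    (hstc : ∀ i, FulfillsSTC (Es i) (Ss i)) :
    let F : Fin k → Finset (Sym2 V) :=
      fun i => (Ss i).filter fun e => ∃ j, e ∈ Es j ∧ e ∉ Ss j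
    let H : Fin k → Finset (Sym2 V) := fun i => Ss i \ F i
    (∀ i, FulfillsSTC (Es i) (H i)) ∧ disagree Es H = 0 ∧
      (∑ i : Fin k, ((H i).card : ℤ)) =
        (∑ i : Fin k, ((Ss i).card : ℤ)) - (disagree Es Ss : ℤ) :=
  consistent_relabeling_general Es Ss hstc
end

section
/- Let G = (V, E_1, …, E_k) be a multilayer graph, W its combined weighted wedge graph, and C a vertex cover of W. Define S_i = E_i ∖ { e ∈ E_i : n_e ∈ C } for each i ∈ [k]. Then each S_i fulfills the STC for E_i, d_k(S_1,…,S_k) = 0, and Σ_{i∈[k]} |E_i∖S_i| = Σ_{n_e ∈ C} w(n_e). -/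
open Finset

/-- `C` (a set of vertices `n_e`, identified with the corresponding edges `e`) is a
vertex cover of the combined wedge graph `W` of the multilayer graph: in `W`,
`n_{uv}` and `n_{vw}` are adjacent iff `(v,{u,w})` is a wedge of some layer `E_i`,
and a vertex cover contains at least one endpoint of every edge. -/
def IsCombinedWedgeGraphVC {V : Type*} {k : ℕ} (Es : Fin k → Finset (Sym2 V))
    (C : Finset (Sym2 V)) : Prop :=
  ∀ i : Fin k, ∀ v u w : V, IsWedge (Es i) v u w → s(u, v) ∈ C ∨ s(v, w) ∈ C

/-- The weight `w(n_e) = |{i ∈ [k] : e ∈ E_i}|` of the vertex `n_e` of the combined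
weighted wedge graph. -/
def wedgeWeight {V : Type*} [DecidableEq V] {k : ℕ} (Es : Fin k → Finset (Sym2 V))
    (e : Sym2 V) : ℕ :=
  (Finset.univ.filter fun i => e ∈ Es i).card

section Labeling

variable {V : Type*} [DecidableEq V] {k : ℕ}

theorem fulfillsSTC_filter_not_mem {E C : Finset (Sym2 V)}
    (hC : ∀ v u w, IsWedge E v u w → s(u, v) ∈ C ∨ s(v, w) ∈ C) :
    FulfillsSTC E (E.filter (· ∉ C)) := by
  intro u v w huv hvw huw huvS hvwS
  rw [mem_filter] at huvS hvwS
  by_contra huwE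
  rcases hC v u w ⟨huv, hvw, huw, huvS.1, hvwS.1, huwE⟩ with h | h
  · exact huvS.2 h
  · exact hvwS.2 h

/-- An edge that is weak in some layer lies in `C`, so it is strong in no layer. -/
theorem disagree_filter_not_mem (Es : Fin k → Finset (Sym2 V)) (C : Finset (Sym2 V)) :
    disagree Es (fun i => (Es i).filter (· ∉ C)) = 0 := by
  refine sum_eq_zero fun e he => ?_
  obtain ⟨i, hi⟩ := card_pos.1 (mem_filter.1 he).2
  obtain ⟨-, heEi, heSi⟩ := mem_filter.1 hi
  have heC : e ∈ C := by
    by_contra heC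
    exact heSi (mem_filter.2 ⟨heEi, heC⟩)
  exact card_eq_zero.2 (filter_false_of_mem fun j _ hj => (mem_filter.1 hj).2 heC)

theorem sum_card_filter_mem_eq_sum_wedgeWeight (Es : Fin k → Finset (Sym2 V))
    (C : Finset (Sym2 V)) :
    ∑ i, ((Es i).filter (· ∈ C)).card = ∑ e ∈ C, wedgeWeight Es e := by
  have hswap : ∀ i, ((Es i).filter (· ∈ C)).card = (C.filter (· ∈ Es i)).card := fun i => by
    rw [filter_mem_eq_inter, filter_mem_eq_inter, inter_comm]
  simp only [hswap, wedgeWeight, card_filter]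
  exact sum_comm

end Labeling

theorem vc_gives_consistent_stc_general {V : Type*} [DecidableEq V] {k : ℕ}
    (Es : Fin k → Finset (Sym2 V)) (C : Finset (Sym2 V))
    (hC : IsCombinedWedgeGraphVC Es C) :
    let Ss : Fin k → Finset (Sym2 V) := fun i => Es i \ (Es i).filter (fun e => e ∈ C)
    (∀ i, FulfillsSTC (Es i) (Ss i)) ∧ disagree Es Ss = 0 ∧
      (∑ i : Fin k, (Es i \ Ss i).card) = ∑ e ∈ C, wedgeWeight Es e := by
  intro Ss
  have hSs : Ss = fun i => (Es i).filter (· ∉ C) := funext fun i => (filter_not _ _).symm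
  have hweak : ∀ i, Es i \ Ss i = (Es i).filter (· ∈ C) := fun i =>
    Finset.sdiff_sdiff_eq_self (filter_subset _ _)
  refine ⟨fun i => ?_, ?_, ?_⟩
  · rw [hSs]
    exact fulfillsSTC_filter_not_mem (hC i)
  · rw [hSs]
    exact disagree_filter_not_mem Es C
  · simp only [hweak]
    exact sum_card_filter_mem_eq_sum_wedgeWeight Es C

/-- From a vertex cover `C` of the combined weighted wedge graph, the labelings
`S_i = E_i ∖ {e ∈ E_i : n_e ∈ C}` fulfill the STC in every layer, have no
disagreements, and `∑_i |E_i ∖ S_i|` equals the weight of `C`. -/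
theorem vc_gives_consistent_stc {V : Type*} [DecidableEq V] {k : ℕ}
    (Es : Fin k → Finset (Sym2 V)) (C : Finset (Sym2 V))
    (hCsub : C ⊆ Finset.univ.biUnion Es) (hC : IsCombinedWedgeGraphVC Es C) :
    let Ss : Fin k → Finset (Sym2 V) := fun i => Es i \ (Es i).filter (fun e => e ∈ C)
    (∀ i, FulfillsSTC (Es i) (Ss i)) ∧ disagree Es Ss = 0 ∧
      (∑ i : Fin k, (Es i \ Ss i).card) = ∑ e ∈ C, wedgeWeight Es e :=
  vc_gives_consistent_stc_general Es C hC
end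

section
/- Let G = (V, E_1, …, E_k) be a multilayer graph and S_i ⊆ E_i (i ∈ [k]) labelings each fulfilling the STC for E_i with d_k(S_1,…,S_k) = 0. Then C = { n_e : e ∈ E_i∖S_i for some i ∈ [k] } is a vertex cover of the combined weighted wedge graph W of G, and Σ_{n_e ∈ C} w(n_e) = Σ_{i∈[k]} |E_i∖S_i|. -/
/-!
An edge that is weak in some layer contributes its strong labels to `d_k`, so `d_k = 0` forces
it to be weak in every layer containing it: its weight `w(n_e)` equals its weak count `w(e)`, and
summing `w(e)` over `C` double counts the pairs `(e, i)` with `e ∈ E_i ∖ S_i`. A wedge of `E_i`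
whose two edges were both strong in `S_i` would violate the STC, so one of them lies in `C`.
-/

open Finset

section

variable {V : Type*} [DecidableEq V] {k : ℕ}

lemma IsWedge.mem_sdiff_or_mem_sdiff {E S : Finset (Sym2 V)} (hstc : FulfillsSTC E S)
    {v u w : V} (h : IsWedge E v u w) : s(u, v) ∈ E \ S ∨ s(v, w) ∈ E \ S := by
  obtain ⟨huv, hvw, huw, huvE, hvwE, huwE⟩ := h
  by_contra! hboth
  have huvS : s(u, v) ∈ S := by simpa [huvE] using hboth.1
  have hvwS : s(v, w) ∈ S := by simpa [hvwE] using hboth.2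
  exact huwE (hstc u v w huv hvw huw huvS hvwS)

lemma notMem_of_disagree_eq_zero {Es Ss : Fin k → Finset (Sym2 V)} (hd : disagree Es Ss = 0)
    {e : Sym2 V} {i : Fin k} (he : e ∈ Es i \ Ss i) (j : Fin k) : e ∉ Ss j := by
  have hweak : e ∈ (univ.biUnion Es).filter (fun e => 0 < wCount Es Ss e) := by
    rw [mem_sdiff] at he
    simp only [mem_filter, mem_biUnion, mem_univ, true_and, wCount, card_pos]
    exact ⟨⟨i, he.1⟩, ⟨i, by simpa using he⟩⟩
  have hs : sCount Ss e = 0 := sum_eq_zero_iff.mp hd e hweak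
  rw [sCount, card_eq_zero, filter_eq_empty_iff] at hs
  exact hs (mem_univ j)

lemma wedgeWeight_eq_wCount_of_disagree_eq_zero {Es Ss : Fin k → Finset (Sym2 V)}
    (hd : disagree Es Ss = 0) {e : Sym2 V} {i : Fin k} (he : e ∈ Es i \ Ss i) :
    wedgeWeight Es e = wCount Es Ss e := by
  unfold wedgeWeight wCount
  congr 1
  exact filter_congr fun j _ => (and_iff_left (notMem_of_disagree_eq_zero hd he j)).symm

lemma sum_wCount_eq_sum_card_sdiff {Es Ss : Fin k → Finset (Sym2 V)} {C : Finset (Sym2 V)}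
    (hC : ∀ i, Es i \ Ss i ⊆ C) :
    ∑ e ∈ C, wCount Es Ss e = ∑ i, #(Es i \ Ss i) := by
  calc ∑ e ∈ C, wCount Es Ss e = ∑ i, #{e ∈ C | e ∈ Es i ∧ e ∉ Ss i} :=
        sum_card_bipartiteAbove_eq_sum_card_bipartiteBelow fun e i => e ∈ Es i ∧ e ∉ Ss i
    _ = ∑ i, #(Es i \ Ss i) := sum_congr rfl fun i _ => by
        simp_rw [← mem_sdiff, filter_mem_eq_inter, inter_eq_right.mpr (hC i)]

end

theorem consistent_stc_gives_vc_general {V : Type*} [DecidableEq V] {k : ℕ}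
    (Es Ss : Fin k → Finset (Sym2 V))
    (hstc : ∀ i, FulfillsSTC (Es i) (Ss i)) (hd : disagree Es Ss = 0) :
    let C : Finset (Sym2 V) :=
      (Finset.univ.biUnion Es).filter fun e => ∃ i, e ∈ Es i ∧ e ∉ Ss i
    IsCombinedWedgeGraphVC Es C ∧
      (∑ e ∈ C, wedgeWeight Es e) = ∑ i : Fin k, (Es i \ Ss i).card := by
  intro C
  have hmemC : ∀ {e i}, e ∈ Es i \ Ss i → e ∈ C := fun {e i} he => by
    rw [mem_sdiff] at he
    exact mem_filter.mpr ⟨mem_biUnion.mpr ⟨i, mem_univ i, he.1⟩, i, he⟩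
  refine ⟨fun i v u w hw => (hw.mem_sdiff_or_mem_sdiff (hstc i)).imp hmemC hmemC, ?_⟩
  calc ∑ e ∈ C, wedgeWeight Es e = ∑ e ∈ C, wCount Es Ss e := sum_congr rfl fun e he => by
        obtain ⟨i, hi⟩ := (mem_filter.mp he).2
        exact wedgeWeight_eq_wCount_of_disagree_eq_zero hd (mem_sdiff.mpr hi)
    _ = ∑ i, #(Es i \ Ss i) := sum_wCount_eq_sum_card_sdiff fun _ _ => hmemC

/-- From labelings fulfilling the STC in every layer with no disagreements, the set
`C = {n_e : e ∈ E_i ∖ S_i for some i}` is a vertex cover of the combined weighted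
wedge graph, and its weight equals `∑_i |E_i ∖ S_i|`. -/
theorem consistent_stc_gives_vc {V : Type*} [DecidableEq V] {k : ℕ}
    (Es Ss : Fin k → Finset (Sym2 V)) (hS : ∀ i, Ss i ⊆ Es i)
    (hstc : ∀ i, FulfillsSTC (Es i) (Ss i)) (hd : disagree Es Ss = 0) :
    let C : Finset (Sym2 V) :=
      (Finset.univ.biUnion Es).filter fun e => ∃ i, e ∈ Es i ∧ e ∉ Ss i
    IsCombinedWedgeGraphVC Es C ∧
      (∑ e ∈ C, wedgeWeight Es e) = ∑ i : Fin k, (Es i \ Ss i).card :=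
  consistent_stc_gives_vc_general Es Ss hstc hd
end

section
/- Let G = (V, E_1, …, E_k) be a multilayer graph and W its combined weighted wedge graph. Then the optimum of MinMultiLayerSTC on G, i.e., the minimum of Σ_{i∈[k]} |E_i∖S_i| + d_k(S_1,…,S_k) over all families of labelings S_i ⊆ E_i each fulfilling the STC for E_i, equals the minimum weight of a vertex cover of W. -/
open Finset

/-!
An edge that is weak in some layer costs exactly its weight `w(n_e)`: once for each layer
where it is weak, and once (as a disagreement) for each layer where it is strong; an edge
that is strong in every layer costs nothing. Hence the cost of `S_1, …, S_k` is the weight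
of the set of edges weak somewhere, and that set covers every wedge if each `S_i` fulfills
the STC. Conversely a cover `C` yields the labelings `S_i = E_i ∖ C`, whose edges
weak somewhere are exactly `C`.
-/

section

variable {V : Type*} [DecidableEq V] {k : ℕ}

def weakEdges (Es Ss : Fin k → Finset (Sym2 V)) : Finset (Sym2 V) :=
  (univ.biUnion Es).filter fun e => 0 < wCount Es Ss e

lemma mem_weakEdges {Es Ss : Fin k → Finset (Sym2 V)} {e : Sym2 V} :
    e ∈ weakEdges Es Ss ↔ ∃ i, e ∈ Es i ∧ e ∉ Ss i := by
  simp only [weakEdges, wCount, mem_filter, mem_biUnion, mem_univ, true_and, card_pos,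
    filter_nonempty_iff]
  exact ⟨fun h => h.2, fun ⟨i, hi⟩ => ⟨⟨i, hi.1⟩, i, hi⟩⟩

lemma wCount_add_sCount {Es Ss : Fin k → Finset (Sym2 V)} (hS : ∀ i, Ss i ⊆ Es i)
    (e : Sym2 V) : wCount Es Ss e + sCount Ss e = wedgeWeight Es e := by
  rw [wCount, sCount, wedgeWeight, ← card_union_of_disjoint (disjoint_filter.2 fun _ _ h => h.2),
    ← filter_or]
  congr 1
  ext i
  simp only [mem_filter, mem_univ, true_and]
  constructor
  · rintro (h | h)
    exacts [h.1, hS i h]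
  · intro h
    by_cases hs : e ∈ Ss i
    exacts [Or.inr hs, Or.inl ⟨h, hs⟩]

lemma sum_card_sdiff_eq_sum_wCount (Es Ss : Fin k → Finset (Sym2 V)) :
    ∑ i, (Es i \ Ss i).card = ∑ e ∈ univ.biUnion Es, wCount Es Ss e := by
  have hsdiff : ∀ i, Es i \ Ss i = (univ.biUnion Es).filter fun e => e ∈ Es i ∧ e ∉ Ss i := by
    intro i
    ext e
    simp only [mem_sdiff, mem_filter, mem_biUnion, mem_univ, true_and]
    exact ⟨fun h => ⟨⟨i, h.1⟩, h⟩, fun h => h.2⟩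
  simp_rw [hsdiff, card_filter, wCount, card_filter]
  exact sum_comm

lemma cost_eq_sum_wedgeWeight_weakEdges {Es Ss : Fin k → Finset (Sym2 V)}
    (hS : ∀ i, Ss i ⊆ Es i) :
    ∑ i, (Es i \ Ss i).card + disagree Es Ss = ∑ e ∈ weakEdges Es Ss, wedgeWeight Es e := by
  have hweak : ∑ e ∈ univ.biUnion Es, wCount Es Ss e
      = ∑ e ∈ weakEdges Es Ss, wCount Es Ss e :=
    (sum_filter_of_ne fun _ _ hne => Nat.pos_of_ne_zero hne).symm
  rw [sum_card_sdiff_eq_sum_wCount, hweak, disagree, ← weakEdges, ← sum_add_distrib]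
  exact sum_congr rfl fun e _ => wCount_add_sCount hS e

lemma isCombinedWedgeGraphVC_weakEdges {Es Ss : Fin k → Finset (Sym2 V)}
    (hSTC : ∀ i, FulfillsSTC (Es i) (Ss i)) : IsCombinedWedgeGraphVC Es (weakEdges Es Ss) := by
  rintro i v u w ⟨huv, hvw, huw, hu, hw, hnot⟩
  simp only [mem_weakEdges]
  by_contra! h
  exact hnot (hSTC i u v w huv hvw huw (h.1 i hu) (h.2 i hw))

lemma fulfillsSTC_sdiff {Es : Fin k → Finset (Sym2 V)} {C : Finset (Sym2 V)}
    (hC : IsCombinedWedgeGraphVC Es C) (i : Fin k) : FulfillsSTC (Es i) (Es i \ C) := by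
  intro u v w huv hvw huw hu hw
  rw [mem_sdiff] at hu hw
  by_contra hnot
  rcases hC i v u w ⟨huv, hvw, huw, hu.1, hw.1, hnot⟩ with h | h
  exacts [hu.2 h, hw.2 h]

lemma weakEdges_sdiff {Es : Fin k → Finset (Sym2 V)} {C : Finset (Sym2 V)}
    (hC : C ⊆ univ.biUnion Es) : weakEdges Es (fun i => Es i \ C) = C := by
  ext e
  simp only [mem_weakEdges, mem_sdiff, not_and, not_not]
  constructor
  · rintro ⟨i, he, hsd⟩
    exact hsd he
  · intro he
    obtain ⟨i, -, hi⟩ := mem_biUnion.1 (hC he)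
    exact ⟨i, hi, fun _ => he⟩

end

/-- The optimum of MinMultiLayerSTC equals the minimum weight of a vertex cover of
the combined weighted wedge graph. -/
theorem min_multilayer_stc_eq_min_weight_vc {V : Type*} [DecidableEq V] {k : ℕ}
    (Es : Fin k → Finset (Sym2 V)) :
    sInf {n : ℕ | ∃ Ss : Fin k → Finset (Sym2 V),
        (∀ i, Ss i ⊆ Es i) ∧ (∀ i, FulfillsSTC (Es i) (Ss i)) ∧
        n = (∑ i : Fin k, (Es i \ Ss i).card) + disagree Es Ss}
      = sInf {n : ℕ | ∃ C : Finset (Sym2 V),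
        C ⊆ Finset.univ.biUnion Es ∧ IsCombinedWedgeGraphVC Es C ∧
        n = ∑ e ∈ C, wedgeWeight Es e} := by
  congr 1
  ext n
  constructor
  · rintro ⟨Ss, hS, hSTC, rfl⟩
    exact ⟨weakEdges Es Ss, filter_subset _ _, isCombinedWedgeGraphVC_weakEdges hSTC,
      cost_eq_sum_wedgeWeight_weakEdges hS⟩
  · rintro ⟨C, hC, hVC, rfl⟩
    refine ⟨fun i => Es i \ C, fun i => sdiff_subset, fulfillsSTC_sdiff hVC, ?_⟩
    rw [cost_eq_sum_wedgeWeight_weakEdges fun i => sdiff_subset, weakEdges_sdiff hC]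
end

section
/- Let H = (V, E) be a 3-uniform hypergraph with vertex weights w : V → ℝ_{≥0} and let p : E → ℝ_{≥0} be a feasible price assignment, i.e., Σ_{e ∋ v} p(e) ≤ w(v) for every vertex v. If the set C of tight vertices (those v with Σ_{e ∋ v} p(e) = w(v)) is a vertex cover of H, then Σ_{v∈C} w(v) ≤ 3 · Σ_{v∈C'} w(v) for every vertex cover C' of H; in particular, the weight of C is at most 3 times the minimum weight of a vertex cover of H. -/
open Finset

/-!
Each tight vertex has weight equal to the total price of the edges through it, so summing over the
tight set counts every edge at most three times: `w(C) ≤ 3 ∑ₑ p e`. Conversely every edge meets the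
cover `C'`, so summing the feasibility inequalities over `C'` counts every edge at least once:
`∑ₑ p e ≤ w(C')`.
-/

namespace Hypergraph

variable {α R : Type*} [DecidableEq α]

def load [AddCommMonoid R] (E : Finset (Finset α)) (p : Finset α → R) (v : α) : R :=
  ∑ e ∈ E with v ∈ e, p e

theorem sum_load_eq_sum_card_inter_mul [CommSemiring R] (E : Finset (Finset α))
    (p : Finset α → R) (S : Finset α) :
    ∑ v ∈ S, load E p v = ∑ e ∈ E, (#(S ∩ e) : R) * p e := by
  simp only [load, sum_filter]
  rw [sum_comm]
  refine sum_congr rfl fun e _ => ?_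
  rw [← sum_filter, sum_const, nsmul_eq_mul, filter_mem_eq_inter]

variable [CommSemiring R] [PartialOrder R] [IsOrderedRing R]
  {E : Finset (Finset α)} {p : Finset α → R} {w : α → R}

theorem sum_tight_le_mul_sum {k : ℕ} (hk : ∀ e ∈ E, #e ≤ k) (hp : ∀ e ∈ E, 0 ≤ p e)
    {C : Finset α} (hC : ∀ v ∈ C, load E p v = w v) :
    ∑ v ∈ C, w v ≤ k * ∑ e ∈ E, p e := by
  rw [← sum_congr rfl hC, sum_load_eq_sum_card_inter_mul, mul_sum]
  refine sum_le_sum fun e he => mul_le_mul_of_nonneg_right ?_ (hp e he)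
  exact Nat.mono_cast ((card_le_card inter_subset_right).trans (hk e he))

theorem sum_le_sum_of_isCover (hp : ∀ e ∈ E, 0 ≤ p e) {C : Finset α}
    (hfeas : ∀ v ∈ C, load E p v ≤ w v) (hC : ∀ e ∈ E, ∃ v ∈ e, v ∈ C) :
    ∑ e ∈ E, p e ≤ ∑ v ∈ C, w v :=
  calc ∑ e ∈ E, p e ≤ ∑ e ∈ E, (#(C ∩ e) : R) * p e := by
        refine sum_le_sum fun e he => le_mul_of_one_le_left (hp e he) ?_
        obtain ⟨v, hve, hvC⟩ := hC e he
        exact Nat.cast_one (R := R) ▸ Nat.mono_cast (card_pos.2 ⟨v, mem_inter.2 ⟨hvC, hve⟩⟩)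
    _ = ∑ v ∈ C, load E p v := (sum_load_eq_sum_card_inter_mul E p C).symm
    _ ≤ ∑ v ∈ C, w v := sum_le_sum hfeas

end Hypergraph

theorem pricing_three_approx_general {X : Type*} [DecidableEq X]
    (Eh : Finset (Finset X)) (h3 : ∀ e ∈ Eh, e.card = 3)
    (w : X → ℝ)
    (p : Finset X → ℝ) (hp : ∀ e ∈ Eh, 0 ≤ p e)
    (hfeas : ∀ v : X, ∑ e ∈ Eh.filter (fun e => v ∈ e), p e ≤ w v)
    (C : Finset X)
    (hCtight : ∀ v : X, v ∈ C ↔ ∑ e ∈ Eh.filter (fun e => v ∈ e), p e = w v)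
    (C' : Finset X) (hC' : ∀ e ∈ Eh, ∃ v ∈ e, v ∈ C') :
    ∑ v ∈ C, w v ≤ 3 * ∑ v ∈ C', w v :=
  calc ∑ v ∈ C, w v ≤ (3 : ℕ) * ∑ e ∈ Eh, p e :=
        Hypergraph.sum_tight_le_mul_sum (fun e he => (h3 e he).le) hp fun v hv => (hCtight v).1 hv
    _ ≤ 3 * ∑ v ∈ C', w v := by
        push_cast
        gcongr
        exact Hypergraph.sum_le_sum_of_isCover hp (fun v _ => hfeas v) hC'

/-- The pricing method for 3-uniform hypergraphs: if `p` is a feasible price assignment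
and the set `C` of tight vertices is a vertex cover, then the weight of `C` is at most
`3` times the weight of any vertex cover `C'`. -/
theorem pricing_three_approx {X : Type*} [Fintype X] [DecidableEq X]
    (Eh : Finset (Finset X)) (h3 : ∀ e ∈ Eh, e.card = 3)
    (w : X → ℝ) (hw : ∀ v, 0 ≤ w v)
    (p : Finset X → ℝ) (hp : ∀ e ∈ Eh, 0 ≤ p e)
    (hfeas : ∀ v : X, ∑ e ∈ Eh.filter (fun e => v ∈ e), p e ≤ w v)
    (C : Finset X)
    (hCtight : ∀ v : X, v ∈ C ↔ ∑ e ∈ Eh.filter (fun e => v ∈ e), p e = w v)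
    (hCcover : ∀ e ∈ Eh, ∃ v ∈ e, v ∈ C)
    (C' : Finset X) (hC' : ∀ e ∈ Eh, ∃ v ∈ e, v ∈ C') :
    ∑ v ∈ C, w v ≤ 3 * ∑ v ∈ C', w v :=
  pricing_three_approx_general Eh h3 w p hp hfeas C hCtight C' hC'
end

section
/- Let G = (V, E_1, …, E_k) be a multilayer graph, W its combined wedge hypergraph with vertex weights w(n_e) = |{ i : e ∈ E_i }| + |{ i : e ∈ N_i }|, and C a vertex cover of W. For each i ∈ [k] define E_i^N = { e ∈ N_i : n_e ∈ C } and S_i = E_i ∖ { e ∈ E_i : n_e ∈ C }. Then each S_i fulfills the STC for E_i ∪ E_i^N, d_k(S_1,…,S_k) = 0, the sets E_i^N satisfy condition (3) of MinMultiLayerSTC+Variant, and Σ_{i∈[k]} |E_i^N ∪ (E_i∖S_i)| = Σ_{n_e ∈ C} w(n_e). -/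
open Finset

/-- `(V choose 2)`: the set of all 2-element subsets of `V`, as elements of `Sym2 V`. -/
def allPairs (V : Type*) [Fintype V] [DecidableEq V] : Finset (Sym2 V) :=
  Finset.univ.filter fun e => ¬ e.IsDiag

instance {V : Type*} [DecidableEq V] (E : Finset (Sym2 V)) (v u w : V) :
    Decidable (IsWedge E v u w) := by
  unfold IsWedge; infer_instance

/-- `N_i`: the candidate new edges of layer `i`, i.e. the non-edges `e` of layer `i`
such that `(v, e)` is a wedge of `E_i` for some `v`. -/
def candNew {V : Type*} [Fintype V] [DecidableEq V] {k : ℕ}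
    (Es : Fin k → Finset (Sym2 V)) (i : Fin k) : Finset (Sym2 V) :=
  (allPairs V \ Es i).filter fun e => ∃ v u w, IsWedge (Es i) v u w ∧ e = s(u, w)

/-- `C` (a set of vertices `n_e`, identified with the corresponding edges `e`) is a
vertex cover of the combined wedge hypergraph `W`: for every layer `i` and every wedge
`(v, {u, w}) ∈ 𝒲(E_i)`, `W` has the hyperedge `{n_{uv}, n_{vw}, n_{uw}}`, and a vertex
cover intersects every hyperedge. -/
def IsCombinedHypergraphVC {V : Type*} {k : ℕ} (Es : Fin k → Finset (Sym2 V))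
    (C : Finset (Sym2 V)) : Prop :=
  ∀ i : Fin k, ∀ v u w : V, IsWedge (Es i) v u w →
    s(u, v) ∈ C ∨ s(v, w) ∈ C ∨ s(u, w) ∈ C

/-- The weight `w(n_e) = |{i : e ∈ E_i}| + |{i : e ∈ N_i}|` of the vertex `n_e` of the
combined wedge hypergraph. -/
def hyperWeight {V : Type*} [Fintype V] [DecidableEq V] {k : ℕ}
    (Es : Fin k → Finset (Sym2 V)) (e : Sym2 V) : ℕ :=
  (Finset.univ.filter fun i => e ∈ Es i).card +
    (Finset.univ.filter fun i => e ∈ candNew Es i).card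

/-- Condition (3) of MinMultiLayerSTC+Variant. -/
def Cond3 {V : Type*} {k : ℕ} (Es ENs : Fin k → Finset (Sym2 V)) : Prop :=
  ∀ i j : Fin k, ∀ u w : V,
    s(u, w) ∈ ENs i → (∃ v, IsWedge (Es j) v u w) → s(u, w) ∈ ENs j

/-!
Both legs of a wedge of `E_i` that are labeled strong are outside the cover `C`, so `C` must
contain the closing pair, which is then added as a new edge: this gives the STC. Every pair of
`C` is weak in every layer, and pairs outside `C` are never weak, so there are no disagreements.
Finally, the cost counts each `e ∈ C` once for every layer in which it is an edge or a candidate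
new edge (never both), which is exactly `w(n_e)`.
-/

section Layer

variable {V : Type*} [Fintype V] [DecidableEq V] {k : ℕ}

lemma IsWedge.mem_candNew {Es : Fin k → Finset (Sym2 V)} {i : Fin k} {v u w : V}
    (h : IsWedge (Es i) v u w) : s(u, w) ∈ candNew Es i := by
  simp only [candNew, allPairs, mem_filter, mem_sdiff, mem_univ, true_and, Sym2.mk_isDiag_iff]
  exact ⟨⟨h.2.2.1, h.2.2.2.2.2⟩, v, u, w, h, rfl⟩

lemma disjoint_candNew (Es : Fin k → Finset (Sym2 V)) (i : Fin k) :
    Disjoint (candNew Es i) (Es i) :=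
  disjoint_left.2 fun _ he => (mem_sdiff.1 (mem_filter.1 he).1).2

lemma cond3_candNew_filter_mem (Es : Fin k → Finset (Sym2 V)) (C : Finset (Sym2 V)) :
    Cond3 Es fun i => (candNew Es i).filter (· ∈ C) := by
  rintro i j u w hin ⟨v, hw⟩
  exact mem_filter.2 ⟨hw.mem_candNew, (mem_filter.1 hin).2⟩

lemma sum_card_filter_mem_eq_sum_card_filter {ι α : Type*} [Fintype ι] [DecidableEq α]
    (s : Finset α) (A : ι → Finset α) :
    ∑ i, #(s.filter (· ∈ A i)) = ∑ a ∈ s, #(univ.filter (a ∈ A ·)) :=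
  sum_card_bipartiteAbove_eq_sum_card_bipartiteBelow (fun i a => a ∈ A i)

lemma sum_card_filter_mem_union_eq_sum_hyperWeight (Es : Fin k → Finset (Sym2 V))
    (C : Finset (Sym2 V)) :
    ∑ i, #((candNew Es i).filter (· ∈ C) ∪ (Es i).filter (· ∈ C)) =
      ∑ e ∈ C, hyperWeight Es e := by
  calc ∑ i, #((candNew Es i).filter (· ∈ C) ∪ (Es i).filter (· ∈ C))
      = ∑ i, (#(C.filter (· ∈ Es i)) + #(C.filter (· ∈ candNew Es i))) := by
        refine sum_congr rfl fun i _ => ?_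
        rw [card_union_of_disjoint
          ((disjoint_candNew Es i).mono (filter_subset _ _) (filter_subset _ _)),
          add_comm, filter_mem_eq_inter, filter_mem_eq_inter, filter_mem_eq_inter,
          filter_mem_eq_inter, inter_comm, inter_comm (candNew Es i)]
    _ = ∑ e ∈ C, hyperWeight Es e := by
        rw [sum_add_distrib, sum_card_filter_mem_eq_sum_card_filter,
          sum_card_filter_mem_eq_sum_card_filter, ← sum_add_distrib]
        rfl

end Layer

lemma fulfillsSTC_union_of_isWedge {V : Type*} [DecidableEq V] {E S N : Finset (Sym2 V)}
    (hS : S ⊆ E)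
    (hN : ∀ v u w, IsWedge E v u w → s(u, v) ∈ S → s(v, w) ∈ S → s(u, w) ∈ N) :
    FulfillsSTC (E ∪ N) S := by
  intro u v w huv hvw huw huvS hvwS
  by_cases huwE : s(u, w) ∈ E
  · exact mem_union_left _ huwE
  · exact mem_union_right _ <|
      hN v u w ⟨huv, hvw, huw, hS huvS, hS hvwS, huwE⟩ huvS hvwS

lemma disagree_eq_zero {V : Type*} [DecidableEq V] {k : ℕ} {Es Ss : Fin k → Finset (Sym2 V)}
    (h : ∀ e i j, e ∈ Es i → e ∉ Ss i → e ∉ Ss j) : disagree Es Ss = 0 := by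
  refine sum_eq_zero fun e he => ?_
  obtain ⟨i, hi⟩ := card_pos.1 (mem_filter.1 he).2
  obtain ⟨heE, heS⟩ := (mem_filter.1 hi).2
  exact card_eq_zero.2 <| filter_eq_empty_iff.2 fun j _ => h e i j heE heS

theorem hypergraph_vc_gives_stc_plus_general {V : Type*} [Fintype V] [DecidableEq V] {k : ℕ}
    (Es : Fin k → Finset (Sym2 V)) (C : Finset (Sym2 V))
    (hC : IsCombinedHypergraphVC Es C) :
    let ENs : Fin k → Finset (Sym2 V) := fun i => (candNew Es i).filter (fun e => e ∈ C)
    let Ss : Fin k → Finset (Sym2 V) := fun i => Es i \ (Es i).filter (fun e => e ∈ C)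
    (∀ i, FulfillsSTC (Es i ∪ ENs i) (Ss i)) ∧
      disagree (fun i => Es i ∪ ENs i) Ss = 0 ∧
      Cond3 Es ENs ∧
      (∑ i : Fin k, (ENs i ∪ (Es i \ Ss i)).card) = ∑ e ∈ C, hyperWeight Es e := by
  intro ENs Ss
  have mem_Ss : ∀ i e, e ∈ Ss i ↔ e ∈ Es i ∧ e ∉ C := by
    intro i e
    simp only [Ss, mem_sdiff, mem_filter]
    tauto
  have mem_cover_of_weak : ∀ i e, e ∈ Es i ∪ ENs i → e ∉ Ss i → e ∈ C := by
    intro i e he heS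
    rcases mem_union.1 he with he | he
    · by_contra heC
      exact heS ((mem_Ss i e).2 ⟨he, heC⟩)
    · exact (mem_filter.1 he).2
  refine ⟨fun i => fulfillsSTC_union_of_isWedge sdiff_subset fun v u w hw huv hvw => ?_,
    disagree_eq_zero fun e i j he heS => ?_, cond3_candNew_filter_mem Es C, ?_⟩
  · rw [mem_Ss] at huv hvw
    have huwC := (hC i v u w hw).resolve_left huv.2 |>.resolve_left hvw.2
    exact mem_filter.2 ⟨hw.mem_candNew, huwC⟩
  · exact fun heS' => ((mem_Ss j e).1 heS').2 (mem_cover_of_weak i e he heS)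
  · simp only [Ss, Finset.sdiff_sdiff_eq_self (filter_subset _ _)]
    exact sum_card_filter_mem_union_eq_sum_hyperWeight Es C

/-- From a vertex cover `C` of the combined wedge hypergraph, the new edge sets
`E_i^N = {e ∈ N_i : n_e ∈ C}` and labelings `S_i = E_i ∖ {e ∈ E_i : n_e ∈ C}` fulfill
the STC for `E_i ∪ E_i^N` in every layer, have no disagreements, satisfy condition (3)
of MinMultiLayerSTC+Variant, and `∑_i |E_i^N ∪ (E_i ∖ S_i)|` equals the weight of `C`. -/
theorem hypergraph_vc_gives_stc_plus {V : Type*} [Fintype V] [DecidableEq V] {k : ℕ}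
    (Es : Fin k → Finset (Sym2 V)) (C : Finset (Sym2 V))
    (hCsub : C ⊆ Finset.univ.biUnion (fun i => Es i ∪ candNew Es i))
    (hC : IsCombinedHypergraphVC Es C) :
    let ENs : Fin k → Finset (Sym2 V) := fun i => (candNew Es i).filter (fun e => e ∈ C)
    let Ss : Fin k → Finset (Sym2 V) := fun i => Es i \ (Es i).filter (fun e => e ∈ C)
    (∀ i, FulfillsSTC (Es i ∪ ENs i) (Ss i)) ∧
      disagree (fun i => Es i ∪ ENs i) Ss = 0 ∧
      Cond3 Es ENs ∧
      (∑ i : Fin k, (ENs i ∪ (Es i \ Ss i)).card) = ∑ e ∈ C, hyperWeight Es e :=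
  hypergraph_vc_gives_stc_plus_general Es C hC
end

section
/- Let G = (V, E_1, …, E_k) be a multilayer graph and let E_i^N ⊆ (V choose 2)∖E_i and S_i ⊆ E_i (i ∈ [k]) be a feasible solution of MinMultiLayerSTC+Variant with d_k(S_1,…,S_k) = 0, i.e., each S_i fulfills the STC for E_i ∪ E_i^N, condition (3) holds, and there is no disagreement. Then C = { n_e : e ∈ (E_i∖S_i) ∪ E_i^N for some i ∈ [k] } is a vertex cover of the combined wedge hypergraph W of G. -/
open Finset

/-!
In a wedge `(v, {u, w})` of layer `i`, either one of the legs `uv`, `vw` is weak in `S_i`,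
or both are strong and the strong triadic closure for `E_i ∪ E_i^N` forces the missing
edge `uw` into `E_i^N`. In every case one of the three vertices of the hyperedge lies in `C`.
-/

theorem IsWedge.sym2_mk_mem_candNew {V : Type*} [Fintype V] [DecidableEq V] {k : ℕ}
    {Es : Fin k → Finset (Sym2 V)} {i : Fin k} {v u w : V} (hw : IsWedge (Es i) v u w) :
    s(u, w) ∈ candNew Es i := by
  obtain ⟨-, -, huw, -, -, hnot⟩ := id hw
  have hpair : s(u, w) ∈ allPairs V := by simpa [allPairs] using huw
  exact mem_filter.2 ⟨mem_sdiff.2 ⟨hpair, hnot⟩, v, u, w, hw, rfl⟩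

theorem IsWedge.mem_sdiff_or_mem_of_fulfillsSTC {V : Type*} [DecidableEq V]
    {E EN S : Finset (Sym2 V)} {v u w : V} (hw : IsWedge E v u w) (hstc : FulfillsSTC (E ∪ EN) S) :
    s(u, v) ∈ E \ S ∨ s(v, w) ∈ E \ S ∨ s(u, w) ∈ EN := by
  obtain ⟨huv, hvw, huw, hE₁, hE₂, hnot⟩ := hw
  by_cases hS₁ : s(u, v) ∈ S
  · by_cases hS₂ : s(v, w) ∈ S
    · have hclosed := hstc u v w huv hvw huw hS₁ hS₂
      exact Or.inr (Or.inr ((mem_union.1 hclosed).resolve_left hnot))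
    · exact Or.inr (Or.inl (mem_sdiff.2 ⟨hE₂, hS₂⟩))
  · exact Or.inl (mem_sdiff.2 ⟨hE₁, hS₁⟩)

theorem mem_filter_biUnion_of_mem_layer {V : Type*} [Fintype V] [DecidableEq V] {k : ℕ}
    {Es ENs Ss : Fin k → Finset (Sym2 V)} {e : Sym2 V} (i : Fin k)
    (hW : e ∈ Es i ∪ candNew Es i) (hC : e ∈ (Es i \ Ss i) ∪ ENs i) :
    e ∈ (univ.biUnion fun i => Es i ∪ candNew Es i).filter
      fun e => ∃ i, e ∈ (Es i \ Ss i) ∪ ENs i :=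
  mem_filter.2 ⟨mem_biUnion.2 ⟨i, mem_univ i, hW⟩, i, hC⟩

theorem stc_plus_variant_gives_hypergraph_vc_general {V : Type*} [Fintype V] [DecidableEq V]
    {k : ℕ} (Es ENs Ss : Fin k → Finset (Sym2 V))
    (hstc : ∀ i, FulfillsSTC (Es i ∪ ENs i) (Ss i)) :
    IsCombinedHypergraphVC Es
      ((Finset.univ.biUnion (fun i => Es i ∪ candNew Es i)).filter
        fun e => ∃ i, e ∈ (Es i \ Ss i) ∪ ENs i) := by
  intro i v u w hw
  rcases hw.mem_sdiff_or_mem_of_fulfillsSTC (hstc i) with hweak | hweak | hnew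
  · exact Or.inl <| mem_filter_biUnion_of_mem_layer i
      (mem_union_left _ (mem_sdiff.1 hweak).1) (mem_union_left _ hweak)
  · exact Or.inr <| Or.inl <| mem_filter_biUnion_of_mem_layer i
      (mem_union_left _ (mem_sdiff.1 hweak).1) (mem_union_left _ hweak)
  · exact Or.inr <| Or.inr <| mem_filter_biUnion_of_mem_layer i
      (mem_union_right _ hw.sym2_mk_mem_candNew) (mem_union_right _ hnew)

/-- From a feasible solution of MinMultiLayerSTC+Variant without disagreements, the set
`C = {n_e : e ∈ (E_i ∖ S_i) ∪ E_i^N for some i}` (restricted to the vertices of `W`) is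
a vertex cover of the combined wedge hypergraph `W`. -/
theorem stc_plus_variant_gives_hypergraph_vc {V : Type*} [Fintype V] [DecidableEq V]
    {k : ℕ} (Es ENs Ss : Fin k → Finset (Sym2 V))
    (hEN : ∀ i, ENs i ⊆ allPairs V \ Es i)
    (hS : ∀ i, Ss i ⊆ Es i)
    (hstc : ∀ i, FulfillsSTC (Es i ∪ ENs i) (Ss i))
    (h3 : Cond3 Es ENs)
    (hd : disagree (fun i => Es i ∪ ENs i) Ss = 0) :
    IsCombinedHypergraphVC Es
      ((Finset.univ.biUnion (fun i => Es i ∪ candNew Es i)).filter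
        fun e => ∃ i, e ∈ (Es i \ Ss i) ∪ ENs i) :=
  stc_plus_variant_gives_hypergraph_vc_general Es ENs Ss hstc
end

section
/- Let G = (V, E_1, …, E_k) be a multilayer graph with aggregated edge set E and for e ∈ E let m(e) = |{ ℓ ∈ [k] : e ∈ E_ℓ }|. Then the optimum of MaxMultiLayerSTC on G, i.e., the maximum of Σ_{i∈[k]} |S_i| − d_k(S_1,…,S_k) over all families of labelings S_i ⊆ E_i each fulfilling the STC for E_i, equals the maximum of Σ_{e∈E} x(e)·m(e) over all functions x : E → {0,1} satisfying x({i,j}) + x({i,h}) ≤ 1 for every wedge (i,{j,h}) ∈ 𝒲(E_ℓ) and every ℓ ∈ [k]. -/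
open Finset

/-- `m(e) = |{ℓ ∈ [k] : e ∈ E_ℓ}|`: the number of layers containing `e`. -/
def mlayers {V : Type*} [DecidableEq V] {k : ℕ} (Es : Fin k → Finset (Sym2 V))
    (e : Sym2 V) : ℕ :=
  (Finset.univ.filter fun i => e ∈ Es i).card

/-!
Edges that are weak in some layer contribute nothing to `∑ |S_i| - d_k`: their strong copies
are exactly cancelled by `d_k`. So the objective is `∑ m(e)` over the edges that are strong in
every layer containing them, and the indicator of these edges satisfies the wedge constraints
by STC. Conversely, labeling in every layer exactly the edges with `x(e) = 1` fulfills STC by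
the wedge constraints, has no disagreements, and has value `∑ x(e) m(e)`. Hence the two
optimisation problems have the same sets of attainable values.
-/

section MultilayerSTC

variable {V : Type*} {k : ℕ}

def labelingOf (Es : Fin k → Finset (Sym2 V)) (x : Sym2 V → ℕ) (i : Fin k) :
    Finset (Sym2 V) :=
  (Es i).filter fun e => x e = 1

lemma labelingOf_subset (Es : Fin k → Finset (Sym2 V)) (x : Sym2 V → ℕ) (i : Fin k) :
    labelingOf Es x i ⊆ Es i :=
  filter_subset _ _

lemma fulfillsSTC_filter_eq_one {E : Finset (Sym2 V)} {x : Sym2 V → ℕ}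
    (hwedge : ∀ v u w : V, IsWedge E v u w → x s(u, v) + x s(v, w) ≤ 1) :
    FulfillsSTC E (E.filter fun e => x e = 1) := by
  intro u v w huv hvw huw huv_mem hvw_mem
  obtain ⟨huv_mem, hx_uv⟩ := mem_filter.mp huv_mem
  obtain ⟨hvw_mem, hx_vw⟩ := mem_filter.mp hvw_mem
  by_contra huw_not_mem
  have := hwedge v u w ⟨huv, hvw, huw, huv_mem, hvw_mem, huw_not_mem⟩
  omega

variable [DecidableEq V]

lemma mem_of_wCount_eq_zero {Es Ss : Fin k → Finset (Sym2 V)} {e : Sym2 V}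
    (hw : wCount Es Ss e = 0) {i : Fin k} (hi : e ∈ Es i) : e ∈ Ss i := by
  by_contra h
  rw [wCount, card_eq_zero, filter_eq_empty_iff] at hw
  exact hw (mem_univ i) ⟨hi, h⟩

lemma sCount_eq_mlayers_of_wCount_eq_zero {Es Ss : Fin k → Finset (Sym2 V)}
    (hsub : ∀ i, Ss i ⊆ Es i) {e : Sym2 V} (hw : wCount Es Ss e = 0) :
    sCount Ss e = mlayers Es e :=
  congrArg card <| filter_congr fun _ _ => ⟨(hsub _ ·), mem_of_wCount_eq_zero hw⟩

lemma sum_sCount_eq_sum_card {Es Ss : Fin k → Finset (Sym2 V)} (hsub : ∀ i, Ss i ⊆ Es i) :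
    ∑ e ∈ univ.biUnion Es, sCount Ss e = ∑ i, (Ss i).card := by
  simp only [sCount, card_filter]
  rw [sum_comm]
  refine sum_congr rfl fun i _ => ?_
  rw [← card_filter, filter_mem_eq_inter,
    inter_eq_right.mpr ((hsub i).trans (subset_biUnion_of_mem Es (mem_univ i)))]

lemma sum_card_sub_disagree {Es Ss : Fin k → Finset (Sym2 V)} (hsub : ∀ i, Ss i ⊆ Es i) :
    (∑ i, (Ss i).card) - disagree Es Ss
      = ∑ e ∈ univ.biUnion Es, if wCount Es Ss e = 0 then mlayers Es e else 0 := by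
  rw [← sum_sCount_eq_sum_card hsub, disagree,
    ← sum_filter_add_sum_filter_not _ (fun e => 0 < wCount Es Ss e), Nat.add_sub_cancel_left,
    sum_ite, sum_const_zero, add_zero]
  refine sum_congr (filter_congr fun e _ => by rw [not_lt, nonpos_iff_eq_zero]) fun e he => ?_
  exact sCount_eq_mlayers_of_wCount_eq_zero hsub (mem_filter.mp he).2

def consensusStrong (Es Ss : Fin k → Finset (Sym2 V)) (e : Sym2 V) : ℕ :=
  if wCount Es Ss e = 0 then 1 else 0

lemma consensusStrong_wedge_le_one {Es Ss : Fin k → Finset (Sym2 V)}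
    {ℓ : Fin k} (hstc : FulfillsSTC (Es ℓ) (Ss ℓ)) {v u w : V}
    (hwedge : IsWedge (Es ℓ) v u w) :
    consensusStrong Es Ss s(u, v) + consensusStrong Es Ss s(v, w) ≤ 1 := by
  obtain ⟨huv, hvw, huw, huv_mem, hvw_mem, huw_not_mem⟩ := hwedge
  unfold consensusStrong
  split_ifs with h₁ h₂ <;> try omega
  exact absurd (hstc u v w huv hvw huw (mem_of_wCount_eq_zero h₁ huv_mem)
    (mem_of_wCount_eq_zero h₂ hvw_mem)) huw_not_mem

lemma sum_card_sub_disagree_eq_sum_consensusStrong {Es Ss : Fin k → Finset (Sym2 V)}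
    (hsub : ∀ i, Ss i ⊆ Es i) :
    (∑ i, (Ss i).card) - disagree Es Ss
      = ∑ e ∈ univ.biUnion Es, consensusStrong Es Ss e * mlayers Es e := by
  rw [sum_card_sub_disagree hsub]
  refine sum_congr rfl fun e _ => ?_
  unfold consensusStrong
  split_ifs <;> simp

lemma sCount_labelingOf (Es : Fin k → Finset (Sym2 V)) {x : Sym2 V → ℕ}
    (hx : ∀ e, x e ≤ 1) (e : Sym2 V) : sCount (labelingOf Es x) e = x e * mlayers Es e := by
  rcases Nat.le_one_iff_eq_zero_or_eq_one.mp (hx e) with h | h <;>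
    simp [sCount, mlayers, labelingOf, h]

lemma disagree_labelingOf (Es : Fin k → Finset (Sym2 V)) (x : Sym2 V → ℕ) :
    disagree Es (labelingOf Es x) = 0 := by
  refine sum_eq_zero fun e he => ?_
  obtain ⟨i, hi⟩ := card_pos.mp (mem_filter.mp he).2
  obtain ⟨-, he_mem, he_weak⟩ := mem_filter.mp hi
  have hxe : x e ≠ 1 := fun h => he_weak (mem_filter.mpr ⟨he_mem, h⟩)
  simp [sCount, labelingOf, hxe]

lemma sum_card_sub_disagree_labelingOf (Es : Fin k → Finset (Sym2 V)) {x : Sym2 V → ℕ}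
    (hx : ∀ e, x e ≤ 1) :
    (∑ i, (labelingOf Es x i).card) - disagree Es (labelingOf Es x)
      = ∑ e ∈ univ.biUnion Es, x e * mlayers Es e := by
  rw [disagree_labelingOf, Nat.sub_zero, ← sum_sCount_eq_sum_card (labelingOf_subset Es x)]
  exact sum_congr rfl fun e _ => sCount_labelingOf Es hx e

end MultilayerSTC

/-- The optimum of MaxMultiLayerSTC equals the optimum of its ILP formulation with
binary variables `x(e)` and constraints `x({u,v}) + x({v,w}) ≤ 1` for every wedge
`(v, {u, w})` of every layer. -/
theorem max_multilayer_stc_eq_ilp {V : Type*} [DecidableEq V] {k : ℕ}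
    (Es : Fin k → Finset (Sym2 V)) :
    sSup {n : ℕ | ∃ Ss : Fin k → Finset (Sym2 V),
        (∀ i, Ss i ⊆ Es i) ∧ (∀ i, FulfillsSTC (Es i) (Ss i)) ∧
        n = (∑ i : Fin k, (Ss i).card) - disagree Es Ss}
      = sSup {n : ℕ | ∃ x : Sym2 V → ℕ, (∀ e, x e ≤ 1) ∧
        (∀ ℓ : Fin k, ∀ v u w : V, IsWedge (Es ℓ) v u w →
          x s(u, v) + x s(v, w) ≤ 1) ∧
        n = ∑ e ∈ Finset.univ.biUnion Es, x e * mlayers Es e} := by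
  congr 1
  ext n
  constructor
  · rintro ⟨Ss, hsub, hstc, rfl⟩
    refine ⟨consensusStrong Es Ss, fun e => ?_, fun ℓ v u w hw => ?_, ?_⟩
    · unfold consensusStrong; split_ifs <;> simp
    · exact consensusStrong_wedge_le_one (hstc ℓ) hw
    · exact sum_card_sub_disagree_eq_sum_consensusStrong hsub
  · rintro ⟨x, hx, hwedge, rfl⟩
    exact ⟨labelingOf Es x, labelingOf_subset Es x, fun i => fulfillsSTC_filter_eq_one (hwedge i),
      (sum_card_sub_disagree_labelingOf Es hx).symm⟩
end
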